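/- Let d be a positive integer and let A, B be finite sets of Boolean vectors in {0,1}^d (functions Fin d → ℝ with values in {0,1}). For a ∈ A let π(a) be the plane curve with vertices π(a)_i = (3i, 1 + 2a_i), and for b ∈ B let σ(b) be the plane curve with vertices σ(b)_i = (3i, 2 − 2b_i), for 1 ≤ i ≤ d. Then there exists a pair (a, b) ∈ A × B with ⟨a, b⟩ = 0 if and only if there exists a pair (a, b) ∈ A × B with discrete Fréchet distance d_F(π(a), σ(b)) ≤ 1. -/

import Mathlib

/-!
A traversal moves the first index from `1` to `d` in unit steps, so it pairs every vertex `π(a)ₖ`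
with some vertex `σ(b)ⱼ`. For `j ≠ k` the two points are at least `3` apart horizontally, and for
`j = k` they are `|2 aₖ + 2 bₖ - 1|` apart vertically: this is `1` when `aₖ bₖ = 0` and `3` when
`aₖ = bₖ = 1`. Hence the diagonal traversal witnesses `d_F ≤ 1` for an orthogonal pair, while a
coordinate with `aₖ = bₖ = 1` forces `d_F ≥ 3`.
-/

/-- A traversal of two curves of length `d`: a sequence `f 1, …, f T` of index
pairs in `{1,…,d}²` with `f 1 = (1,1)`, `f T = (d,d)`, where at each step the
first index advances, the second advances, or both advance together. -/
def IsTraversal (d T : ℕ) (f : ℕ → ℕ × ℕ) : Prop :=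
  1 ≤ T ∧ f 1 = (1, 1) ∧ f T = (d, d) ∧
  (∀ t, 1 ≤ t → t ≤ T →
    1 ≤ (f t).1 ∧ (f t).1 ≤ d ∧ 1 ≤ (f t).2 ∧ (f t).2 ≤ d) ∧
  (∀ t, 1 ≤ t → t < T →
    f (t + 1) = ((f t).1 + 1, (f t).2) ∨
    f (t + 1) = ((f t).1, (f t).2 + 1) ∨
    f (t + 1) = ((f t).1 + 1, (f t).2 + 1))

/-- The discrete Fréchet distance between two curves of length `d` (with
vertices `π 1, …, π d` and `σ 1, …, σ d`): the infimum over all traversals of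
the maximum distance `‖π (f t).1 - σ (f t).2‖` along the traversal. -/
noncomputable def discreteFrechetDist (d : ℕ)
    (π σ : ℕ → EuclideanSpace ℝ (Fin 2)) : ℝ :=
  sInf { r | ∃ T f, ∃ hT : 1 ≤ T, IsTraversal d T f ∧
    r = (Finset.Icc 1 T).sup' (Finset.nonempty_Icc.mpr hT)
      (fun t => ‖π (f t).1 - σ (f t).2‖) }

theorem Nat.exists_eq_of_map_succ_le {g : ℕ → ℕ} {a b i : ℕ} (hab : a ≤ b)
    (hstep : ∀ t, a ≤ t → t < b → g (t + 1) ≤ g t + 1) (ha : g a ≤ i) (hb : i ≤ g b) :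
    ∃ t, a ≤ t ∧ t ≤ b ∧ g t = i := by
  induction b, hab using Nat.le_induction with
  | base => exact ⟨a, le_rfl, le_rfl, le_antisymm ha hb⟩
  | succ b hab ih =>
    by_cases hi : i ≤ g b
    · obtain ⟨t, hat, htb, hgt⟩ := ih (fun t h1 h2 => hstep t h1 (by omega)) hi
      exact ⟨t, hat, by omega, hgt⟩
    · have := hstep b hab (by omega)
      exact ⟨b + 1, by omega, le_rfl, by omega⟩

theorem EuclideanSpace.norm_sub_eq_sqrt_fin_two (x y : EuclideanSpace ℝ (Fin 2)) :
    ‖x - y‖ = √((x 0 - y 0) ^ 2 + (x 1 - y 1) ^ 2) := by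
  simp [EuclideanSpace.norm_eq, Fin.sum_univ_two, sq_abs]

theorem EuclideanSpace.norm_sub_eq_abs_of_apply_zero_eq {x y : EuclideanSpace ℝ (Fin 2)}
    (h : x 0 = y 0) : ‖x - y‖ = |x 1 - y 1| := by
  rw [EuclideanSpace.norm_sub_eq_sqrt_fin_two, h, sub_self, sq, zero_mul, zero_add,
    Real.sqrt_sq_eq_abs]

theorem EuclideanSpace.abs_sub_apply_le_norm_sub {n : Type*} [Fintype n]
    (x y : EuclideanSpace ℝ n) (i : n) : |x i - y i| ≤ ‖x - y‖ := by
  simpa using PiLp.norm_apply_le (x - y) i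

section Frechet

variable {d : ℕ} {π σ : ℕ → EuclideanSpace ℝ (Fin 2)}

theorem isTraversal_diag (hd : 0 < d) : IsTraversal d d fun t => (t, t) :=
  ⟨hd, rfl, rfl, fun _ h1 h2 => ⟨h1, h2, h1, h2⟩, fun _ _ _ => Or.inr (Or.inr rfl)⟩

theorem IsTraversal.exists_fst_eq {T : ℕ} {f : ℕ → ℕ × ℕ} (hf : IsTraversal d T f) {i : ℕ}
    (hi1 : 1 ≤ i) (hid : i ≤ d) : ∃ t, 1 ≤ t ∧ t ≤ T ∧ (f t).1 = i := by
  obtain ⟨hT, hstart, hend, -, hstep⟩ := hf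
  refine Nat.exists_eq_of_map_succ_le hT (fun t h1 h2 => ?_) (by simpa [hstart]) (by simpa [hend])
  rcases hstep t h1 h2 with h | h | h <;> simp [h]

theorem discreteFrechetDist_le_of_isTraversal {T : ℕ} {f : ℕ → ℕ × ℕ} (hf : IsTraversal d T f)
    {r : ℝ} (hr : ∀ t, 1 ≤ t → t ≤ T → ‖π (f t).1 - σ (f t).2‖ ≤ r) :
    discreteFrechetDist d π σ ≤ r := by
  have hbdd : BddBelow { r | ∃ T f, ∃ hT : 1 ≤ T, IsTraversal d T f ∧
      r = (Finset.Icc 1 T).sup' (Finset.nonempty_Icc.mpr hT)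
        (fun t => ‖π (f t).1 - σ (f t).2‖) } := by
    refine ⟨0, ?_⟩
    rintro _ ⟨T, f, hT, -, rfl⟩
    exact (norm_nonneg _).trans
      (Finset.le_sup' (fun t => ‖π (f t).1 - σ (f t).2‖) (Finset.mem_Icc.mpr ⟨le_rfl, hT⟩))
  refine csInf_le_of_le hbdd ⟨T, f, hf.1, hf, rfl⟩ (Finset.sup'_le _ _ fun t ht => ?_)
  exact hr t (Finset.mem_Icc.mp ht).1 (Finset.mem_Icc.mp ht).2

theorem le_discreteFrechetDist_of_forall_le_norm_sub (hd : 0 < d) {k : ℕ} (hk1 : 1 ≤ k)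
    (hkd : k ≤ d) {r : ℝ} (hr : ∀ j, 1 ≤ j → j ≤ d → r ≤ ‖π k - σ j‖) :
    r ≤ discreteFrechetDist d π σ := by
  refine le_csInf ⟨_, d, _, hd, isTraversal_diag hd, rfl⟩ ?_
  rintro _ ⟨T, f, hT, hf, rfl⟩
  obtain ⟨t, ht1, htT, hft⟩ := hf.exists_fst_eq hk1 hkd
  obtain ⟨-, -, hj1, hjd⟩ := hf.2.2.2.1 t ht1 htT
  calc r ≤ ‖π (f t).1 - σ (f t).2‖ := hft ▸ hr _ hj1 hjd
    _ ≤ _ := Finset.le_sup' (fun t => ‖π (f t).1 - σ (f t).2‖) (Finset.mem_Icc.mpr ⟨ht1, htT⟩)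

end Frechet

section VertexDistances

variable {x y : EuclideanSpace ℝ (Fin 2)}

theorem three_le_norm_sub_of_ne {i j : ℕ} {p q : ℝ} (hx : x = ![3 * (i : ℝ), p])
    (hy : y = ![3 * (j : ℝ), q]) (hij : i ≠ j) : 3 ≤ ‖x - y‖ := by
  refine le_trans ?_ (EuclideanSpace.abs_sub_apply_le_norm_sub x y 0)
  simp only [hx, hy, Matrix.cons_val_zero]
  rcases Nat.lt_or_gt_of_ne hij with h | h
  · have h' : (i : ℝ) + 1 ≤ j := by exact_mod_cast h
    rw [abs_sub_comm]
    exact le_trans (by linarith) (le_abs_self _)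
  · have h' : (j : ℝ) + 1 ≤ i := by exact_mod_cast h
    exact le_trans (by linarith) (le_abs_self _)

theorem norm_sub_eq_one_of_mul_eq_zero {c α β : ℝ} (hx : x = ![c, 1 + 2 * α])
    (hy : y = ![c, 2 - 2 * β]) (hα : α = 0 ∨ α = 1) (hβ : β = 0 ∨ β = 1) (h : α * β = 0) :
    ‖x - y‖ = 1 := by
  rw [EuclideanSpace.norm_sub_eq_abs_of_apply_zero_eq (by simp [hx, hy])]
  simp only [hx, hy, Matrix.cons_val_one, Matrix.cons_val_fin_one]
  rcases hα with rfl | rfl <;> rcases hβ with rfl | rfl <;> simp at h <;> norm_num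

theorem norm_sub_eq_three_of_one_one {c : ℝ} (hx : x = ![c, 1 + 2 * 1])
    (hy : y = ![c, 2 - 2 * 1]) : ‖x - y‖ = 3 := by
  rw [EuclideanSpace.norm_sub_eq_abs_of_apply_zero_eq (by simp [hx, hy])]
  norm_num [hx, hy]

end VertexDistances

section OrthogonalVectorCurves

variable {d : ℕ} {a b : Fin d → ℝ} {π σ : ℕ → EuclideanSpace ℝ (Fin 2)}

theorem discreteFrechetDist_le_one_of_forall_mul_eq_zero (hd : 0 < d)
    (ha : ∀ i, a i = 0 ∨ a i = 1) (hb : ∀ i, b i = 0 ∨ b i = 1)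
    (hπ : ∀ (i : ℕ) (h1 : 1 ≤ i) (h2 : i ≤ d),
      π i = ![3 * (i : ℝ), 1 + 2 * a ⟨i - 1, Nat.sub_one_lt_of_le h1 h2⟩])
    (hσ : ∀ (i : ℕ) (h1 : 1 ≤ i) (h2 : i ≤ d),
      σ i = ![3 * (i : ℝ), 2 - 2 * b ⟨i - 1, Nat.sub_one_lt_of_le h1 h2⟩])
    (hab : ∀ i, a i * b i = 0) : discreteFrechetDist d π σ ≤ 1 :=
  discreteFrechetDist_le_of_isTraversal (isTraversal_diag hd) fun i h1 h2 =>
    (norm_sub_eq_one_of_mul_eq_zero (hπ i h1 h2) (hσ i h1 h2) (ha _) (hb _) (hab _)).le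

theorem three_le_discreteFrechetDist_of_eq_one
    (hπ : ∀ (i : ℕ) (h1 : 1 ≤ i) (h2 : i ≤ d),
      π i = ![3 * (i : ℝ), 1 + 2 * a ⟨i - 1, Nat.sub_one_lt_of_le h1 h2⟩])
    (hσ : ∀ (i : ℕ) (h1 : 1 ≤ i) (h2 : i ≤ d),
      σ i = ![3 * (i : ℝ), 2 - 2 * b ⟨i - 1, Nat.sub_one_lt_of_le h1 h2⟩])
    {k : Fin d} (hak : a k = 1) (hbk : b k = 1) : 3 ≤ discreteFrechetDist d π σ := by
  have hk1 : 1 ≤ (k : ℕ) + 1 := by omega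
  have hkd : (k : ℕ) + 1 ≤ d := k.isLt
  refine le_discreteFrechetDist_of_forall_le_norm_sub k.pos hk1 hkd fun j hj1 hjd => ?_
  rcases eq_or_ne ((k : ℕ) + 1) j with rfl | hkj
  · have hπk := hπ _ hk1 hkd
    have hσk := hσ _ hk1 hkd
    simp only [Nat.add_sub_cancel, Fin.eta, hak, hbk] at hπk hσk
    exact (norm_sub_eq_three_of_one_one hπk hσk).ge
  · exact three_le_norm_sub_of_ne (hπ _ hk1 hkd) (hσ _ hj1 hjd) hkj

theorem discreteFrechetDist_le_one_iff_sum_mul_eq_zero (hd : 0 < d)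
    (ha : ∀ i, a i = 0 ∨ a i = 1) (hb : ∀ i, b i = 0 ∨ b i = 1)
    (hπ : ∀ (i : ℕ) (h1 : 1 ≤ i) (h2 : i ≤ d),
      π i = ![3 * (i : ℝ), 1 + 2 * a ⟨i - 1, Nat.sub_one_lt_of_le h1 h2⟩])
    (hσ : ∀ (i : ℕ) (h1 : 1 ≤ i) (h2 : i ≤ d),
      σ i = ![3 * (i : ℝ), 2 - 2 * b ⟨i - 1, Nat.sub_one_lt_of_le h1 h2⟩]) :
    discreteFrechetDist d π σ ≤ 1 ↔ ∑ i, a i * b i = 0 := by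
  have hnonneg {v : Fin d → ℝ} (hv : ∀ i, v i = 0 ∨ v i = 1) (i : Fin d) : 0 ≤ v i := by
    rcases hv i with h | h <;> simp [h]
  rw [Finset.sum_eq_zero_iff_of_nonneg fun i _ => mul_nonneg (hnonneg ha i) (hnonneg hb i)]
  refine ⟨fun hle i _ => ?_, fun h => discreteFrechetDist_le_one_of_forall_mul_eq_zero hd ha hb
    hπ hσ fun i => h i (Finset.mem_univ i)⟩
  by_contra hne
  have hai := (ha i).resolve_left (left_ne_zero_of_mul hne)
  have hbi := (hb i).resolve_left (right_ne_zero_of_mul hne)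
  linarith [three_le_discreteFrechetDist_of_eq_one hπ hσ hai hbi]

end OrthogonalVectorCurves

/-- **Correctness of the reduction from Orthogonal Vectors to Bichromatic
Closest Pair under the Fréchet distance.**
For finite sets `A, B` of Boolean vectors in `{0,1}^d`, embedded as plane
curves with vertices `piC a i = (3i, 1 + 2 aᵢ)` and `sigC b i = (3i, 2 - 2 bᵢ)`
for `1 ≤ i ≤ d`, there is an orthogonal pair `(a, b) ∈ A × B` iff some pair
has discrete Fréchet distance at most `1`. -/
theorem ov_iff_bichromatic_frechet (d : ℕ) (hd : 0 < d)
    (A B : Finset (Fin d → ℝ))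
    (hA : ∀ a ∈ A, ∀ i, a i = 0 ∨ a i = 1)
    (hB : ∀ b ∈ B, ∀ i, b i = 0 ∨ b i = 1)
    (piC sigC : (Fin d → ℝ) → ℕ → EuclideanSpace ℝ (Fin 2))
    (hpi : ∀ (v : Fin d → ℝ) (i : ℕ) (h1 : 1 ≤ i) (h2 : i ≤ d),
      piC v i = ![3 * (i : ℝ), 1 + 2 * v ⟨i - 1, by omega⟩])
    (hsig : ∀ (v : Fin d → ℝ) (i : ℕ) (h1 : 1 ≤ i) (h2 : i ≤ d),
      sigC v i = ![3 * (i : ℝ), 2 - 2 * v ⟨i - 1, by omega⟩]) :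
    (∃ a ∈ A, ∃ b ∈ B, (∑ i, a i * b i) = 0) ↔
    (∃ a ∈ A, ∃ b ∈ B, discreteFrechetDist d (piC a) (sigC b) ≤ 1) := by
  refine exists_congr fun a => and_congr_right fun ha => exists_congr fun b =>
    and_congr_right fun hb => ?_
  exact (discreteFrechetDist_le_one_iff_sum_mul_eq_zero hd (hA a ha) (hB b hb) (hpi a) (hsig b)).symm
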